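/- arXiv:2504.06162 — 2 statements merged into one kernel-verified Lean document; each statement's English description precedes it below -/
import Mathlib

section
/- For i = 1, 2 let u_i ∈ Lip(ℝ^N) and z_i ∈ 𝓜⁺(C_r) with z_i(C_r) ≤ 1 satisfy ∫_{C_r} (u_i(x) − u_i(y)) dz_i(x,y) = osc_{B_r} u_i. Let ψ, g₁, g₂: ℝ → ℝ be continuous and monotone nondecreasing, and set v₁₂ := ψ(g₁(u₁) − g₂(u₂)). Then ∫_{C_r} (v₁₂(x) − v₁₂(y)) d(z₁ − z₂)(x,y) ≥ 0. -/
open MeasureTheory Metric Filter Topology Bornology Set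
open scoped ENNReal NNReal

noncomputable section

/-- `N`-dimensional Euclidean space. -/
abbrev Euc (N : ℕ) := EuclideanSpace ℝ (Fin N)

variable {N : ℕ}

/-- The essential oscillation of `u` over `A` (ess sup minus ess inf), with values in `[0,∞]`. -/
def osc (u : Euc N → ℝ) (A : Set (Euc N)) : ℝ≥0∞ :=
  essSup (fun p : Euc N × Euc N => ENNReal.ofReal (u p.1 - u p.2))
    ((volume.restrict A).prod (volume.restrict A))

/-- The set `C_r = B̄_r × B̄_r`. -/
def Cr (N : ℕ) (r : ℝ) : Set (Euc N × Euc N) := closedBall 0 r ×ˢ closedBall 0 r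

/-!
Since `u` is continuous, `osc_{B_r} u ≥ u x - u y` for all `x, y ∈ B̄_r`; as the integrand
`u x - u y` is at most `max u - min u` on `C_r` and `z(C_r) ≤ 1`, calibration forces `z` to be
carried by pairs `(x, y)` with `u x = max u`, `u y = min u`, and to have mass `1` when `u` is not
constant. Now `v₁₂ = Φ(u₁, u₂)` with `Φ a b = ψ (g₁ a - g₂ b)` nondecreasing in `a` and
nonincreasing in `b`, so the integrand `v₁₂ x - v₁₂ y` is `≥ c` on the support of `z₁` and `≤ c`
on that of `z₂`, where `c = Φ(max u₁, max u₂) - Φ(min u₁, min u₂)`. If `c > 0` then `u₁` is not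
constant and `z₁` has mass `1`; if `c < 0` the same holds for `u₂` and `z₂`. Either way
`z₂(C_r) c ≤ z₁(C_r) c`.
-/

lemma le_essSup_of_mem_closure {X : Type*} [TopologicalSpace X] [MeasurableSpace X]
    [OpensMeasurableSpace X] {μ : Measure X} [μ.IsOpenPosMeasure] {s : Set X} (hs : IsOpen s)
    {f : X → ℝ≥0∞} (hf : Continuous f) {x : X} (hx : x ∈ closure s) :
    f x ≤ essSup f (μ.restrict s) := by
  refine le_of_forall_lt_imp_le_of_dense fun e he => le_limsup_of_frequently_le' ?_
  have hV : IsOpen (f ⁻¹' Ioi e) := isOpen_Ioi.preimage hf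
  have hne : (f ⁻¹' Ioi e ∩ s).Nonempty := mem_closure_iff.mp hx _ hV he
  rw [frequently_ae_iff, ← pos_iff_ne_zero]
  calc 0 < μ (f ⁻¹' Ioi e ∩ s) := (hV.inter hs).measure_pos μ hne
    _ = μ.restrict s (f ⁻¹' Ioi e) := (Measure.restrict_apply' hs.measurableSet).symm
    _ ≤ μ.restrict s {a | e ≤ f a} := measure_mono fun a (ha : e < f a) => ha.le

lemma ofReal_sub_le_osc {A : Set (Euc N)} (hA : IsOpen A) {u : Euc N → ℝ} (hu : Continuous u)
    {x y : Euc N} (hx : x ∈ closure A) (hy : y ∈ closure A) :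
    ENNReal.ofReal (u x - u y) ≤ osc u A := by
  have hf : Continuous fun p : Euc N × Euc N => ENNReal.ofReal (u p.1 - u p.2) :=
    ENNReal.continuous_ofReal.comp (by fun_prop)
  rw [osc, Measure.prod_restrict]
  exact le_essSup_of_mem_closure (x := (x, y)) (hA.prod hA) hf
    (by rw [closure_prod_eq]; exact ⟨hx, hy⟩)

lemma Continuous.integrable_of_ae_mem {X : Type*} [TopologicalSpace X] [T2Space X]
    [MeasurableSpace X] [OpensMeasurableSpace X] {μ : Measure X} [IsFiniteMeasureOnCompacts μ]
    {K : Set X} (hK : IsCompact K) {f : X → ℝ} (hf : Continuous f) (h : ∀ᵐ x ∂μ, x ∈ K) :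
    Integrable f μ := by
  rw [← Measure.restrict_eq_self_of_ae_mem h]
  exact hf.continuousOn.integrableOn_compact hK

section ConstantBound

variable {α : Type*} [MeasurableSpace α] {μ : Measure α} [IsFiniteMeasure μ] {f : α → ℝ} {D : ℝ}

lemma integral_le_of_ae_le_const (hf : Integrable f μ) (hle : ∀ᵐ x ∂μ, f x ≤ D) :
    ∫ x, f x ∂μ ≤ μ.real univ * D := by
  simpa using integral_mono_ae hf (integrable_const D) hle

lemma ae_eq_const_of_ae_le_of_le_integral (hμ : μ.real univ ≤ 1) (hD : 0 ≤ D)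
    (hf : Integrable f μ) (hle : ∀ᵐ x ∂μ, f x ≤ D) (hint : D ≤ ∫ x, f x ∂μ) :
    ∀ᵐ x ∂μ, f x = D := by
  refine (integral_eq_iff_of_ae_le hf (integrable_const D) hle).mp (le_antisymm ?_ ?_)
  · simpa using integral_le_of_ae_le_const hf hle
  · calc ∫ _, D ∂μ = μ.real univ * D := by simp
      _ ≤ D := mul_le_of_le_one_left hD hμ
      _ ≤ ∫ x, f x ∂μ := hint

lemma one_le_measureReal_univ_of_le_integral (hD : 0 < D) (hf : Integrable f μ)
    (hle : ∀ᵐ x ∂μ, f x ≤ D) (hint : D ≤ ∫ x, f x ∂μ) : 1 ≤ μ.real univ :=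
  le_of_mul_le_mul_right (by rw [one_mul]; exact hint.trans (integral_le_of_ae_le_const hf hle)) hD

end ConstantBound

lemma abs_sub_le_of_isMaxOn_of_isMinOn {X : Type*} {K : Set X} {u : X → ℝ} {x₀ y₀ : X}
    (hmax : IsMaxOn u K x₀) (hmin : IsMinOn u K y₀) {p q : X} (hp : p ∈ K) (hq : q ∈ K) :
    |u p - u q| ≤ u x₀ - u y₀ := by
  have := isMaxOn_iff.mp hmax p hp
  have := isMaxOn_iff.mp hmax q hq
  have := isMinOn_iff.mp hmin p hp
  have := isMinOn_iff.mp hmin q hq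
  rw [abs_sub_le_iff]
  constructor <;> linarith

structure IsCalibration (u : Euc N → ℝ) (r : ℝ) (z : Measure (Euc N × Euc N)) : Prop where
  measure_compl_Cr : z (Cr N r)ᶜ = 0
  measure_univ_le_one : z univ ≤ 1
  ofReal_integral_eq_osc : ENNReal.ofReal (∫ q, (u q.1 - u q.2) ∂z) = osc u (ball 0 r)

namespace IsCalibration

variable {r : ℝ} {u : Euc N → ℝ} {z : Measure (Euc N × Euc N)} {x₀ y₀ : Euc N}

lemma isFiniteMeasure (hz : IsCalibration u r z) : IsFiniteMeasure z :=
  ⟨hz.measure_univ_le_one.trans_lt ENNReal.one_lt_top⟩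

lemma measureReal_univ_le_one (hz : IsCalibration u r z) : z.real univ ≤ 1 :=
  ENNReal.toReal_le_of_le_ofReal zero_le_one
    (hz.measure_univ_le_one.trans_eq ENNReal.ofReal_one.symm)

lemma ae_mem_Cr (hz : IsCalibration u r z) : ∀ᵐ q ∂z, q ∈ Cr N r :=
  mem_ae_iff.2 hz.measure_compl_Cr

lemma integrable (hz : IsCalibration u r z) {f : Euc N × Euc N → ℝ} (hf : Continuous f) :
    Integrable f z :=
  have := hz.isFiniteMeasure
  hf.integrable_of_ae_mem ((isCompact_closedBall 0 r).prod (isCompact_closedBall 0 r)) hz.ae_mem_Cr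

lemma ae_abs_sub_le (hz : IsCalibration u r z)
    (hmax : IsMaxOn u (closedBall 0 r) x₀) (hmin : IsMinOn u (closedBall 0 r) y₀) :
    ∀ᵐ q ∂z, |u q.1 - u q.2| ≤ u x₀ - u y₀ := by
  filter_upwards [hz.ae_mem_Cr] with q hq
  exact abs_sub_le_of_isMaxOn_of_isMinOn hmax hmin hq.1 hq.2

lemma le_integral (hz : IsCalibration u r z) (hr : 0 < r) (hu : Continuous u)
    (hx₀ : x₀ ∈ closedBall 0 r) (hy₀ : y₀ ∈ closedBall 0 r)
    (hmax : IsMaxOn u (closedBall 0 r) x₀) (hmin : IsMinOn u (closedBall 0 r) y₀) :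
    u x₀ - u y₀ ≤ ∫ q, (u q.1 - u q.2) ∂z := by
  have hosc := ofReal_sub_le_osc isOpen_ball hu (x := x₀) (y := y₀)
    (by rwa [closure_ball 0 hr.ne']) (by rwa [closure_ball 0 hr.ne'])
  -- `ENNReal.ofReal` truncates at `0`, so the case where `u` is constant on the ball is separate.
  rw [← hz.ofReal_integral_eq_osc, ENNReal.ofReal_le_ofReal_iff'] at hosc
  refine hosc.elim id fun hD => hD.trans (integral_nonneg_of_ae ?_)
  filter_upwards [hz.ae_abs_sub_le hmax hmin] with q hq
  rw [Pi.zero_apply]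
  linarith [neg_abs_le (u q.1 - u q.2)]

lemma ae_eq (hz : IsCalibration u r z) (hr : 0 < r) (hu : Continuous u)
    (hx₀ : x₀ ∈ closedBall 0 r) (hy₀ : y₀ ∈ closedBall 0 r)
    (hmax : IsMaxOn u (closedBall 0 r) x₀) (hmin : IsMinOn u (closedBall 0 r) y₀) :
    ∀ᵐ q ∂z, u q.1 = u x₀ ∧ u q.2 = u y₀ := by
  have := hz.isFiniteMeasure
  have heq := ae_eq_const_of_ae_le_of_le_integral hz.measureReal_univ_le_one
    (sub_nonneg.2 (isMaxOn_iff.mp hmax y₀ hy₀)) (hz.integrable (by fun_prop))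
    ((hz.ae_abs_sub_le hmax hmin).mono fun q hq => (le_abs_self _).trans hq)
    (hz.le_integral hr hu hx₀ hy₀ hmax hmin)
  filter_upwards [heq, hz.ae_mem_Cr] with q hq ⟨hq₁, hq₂⟩
  have := isMaxOn_iff.mp hmax q.1 hq₁
  have := isMinOn_iff.mp hmin q.2 hq₂
  constructor <;> linarith

lemma one_le_measureReal_univ (hz : IsCalibration u r z) (hr : 0 < r) (hu : Continuous u)
    (hx₀ : x₀ ∈ closedBall 0 r) (hy₀ : y₀ ∈ closedBall 0 r)
    (hmax : IsMaxOn u (closedBall 0 r) x₀) (hmin : IsMinOn u (closedBall 0 r) y₀)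
    (hlt : u y₀ < u x₀) : 1 ≤ z.real univ :=
  have := hz.isFiniteMeasure
  one_le_measureReal_univ_of_le_integral (sub_pos.2 hlt) (hz.integrable (by fun_prop))
    ((hz.ae_abs_sub_le hmax hmin).mono fun q hq => (le_abs_self _).trans hq)
    (hz.le_integral hr hu hx₀ hy₀ hmax hmin)

end IsCalibration

section Comparison

variable {ψ g₁ g₂ : ℝ → ℝ}

lemma comp_sub_sub_comp_sub_le (hψ : Monotone ψ) (hg₁ : Monotone g₁) (hg₂ : Monotone g₂)
    {a a' b b' s s' t t' : ℝ} (ha : a ≤ a') (hb : b' ≤ b) (hs : s' ≤ s) (ht : t ≤ t') :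
    ψ (g₁ a - g₂ b) - ψ (g₁ s - g₂ t) ≤ ψ (g₁ a' - g₂ b') - ψ (g₁ s' - g₂ t') :=
  sub_le_sub (hψ (sub_le_sub (hg₁ ha) (hg₂ hb))) (hψ (sub_le_sub (hg₁ hs) (hg₂ ht)))

lemma mul_comp_sub_sub_comp_sub_le (hψ : Monotone ψ) (hg₁ : Monotone g₁) (hg₂ : Monotone g₂)
    {M₁ m₁ M₂ m₂ t₁ t₂ : ℝ} (hm₁ : m₁ ≤ M₁) (hm₂ : m₂ ≤ M₂) (ht₁ : t₁ ≤ 1) (ht₂ : t₂ ≤ 1)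
    (h₁ : m₁ < M₁ → 1 ≤ t₁) (h₂ : m₂ < M₂ → 1 ≤ t₂) :
    t₂ * (ψ (g₁ M₁ - g₂ M₂) - ψ (g₁ m₁ - g₂ m₂)) ≤
      t₁ * (ψ (g₁ M₁ - g₂ M₂) - ψ (g₁ m₁ - g₂ m₂)) := by
  rcases lt_trichotomy (ψ (g₁ M₁ - g₂ M₂) - ψ (g₁ m₁ - g₂ m₂)) 0 with hc | hc | hc
  · have hlt : m₂ < M₂ := lt_of_not_ge fun hM => hc.not_ge <| by
      simpa using
        comp_sub_sub_comp_sub_le hψ hg₁ hg₂ (a := M₁) (s := M₁) (t := m₂) le_rfl hM hm₁ le_rfl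
    exact mul_le_mul_of_nonpos_right (ht₁.trans (h₂ hlt)) hc.le
  · simp [hc]
  · have hlt : m₁ < M₁ := lt_of_not_ge fun hM => hc.not_ge <| by
      simpa using comp_sub_sub_comp_sub_le hψ hg₁ hg₂ (s := m₁) (t := m₂) hM hm₂ le_rfl le_rfl
    exact mul_le_mul_of_nonneg_right (ht₂.trans (h₁ hlt)) hc.le

end Comparison

lemma integral_le_integral_of_ae_le_const_of_ae_const_le {α : Type*} [MeasurableSpace α]
    {μ ν : Measure α} [IsFiniteMeasure μ] [IsFiniteMeasure ν] {F : α → ℝ} {c : ℝ}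
    (hFμ : Integrable F μ) (hFν : Integrable F ν) (hμ : ∀ᵐ x ∂μ, F x ≤ c)
    (hν : ∀ᵐ x ∂ν, c ≤ F x) (hmass : μ.real univ * c ≤ ν.real univ * c) :
    ∫ x, F x ∂μ ≤ ∫ x, F x ∂ν :=
  calc ∫ x, F x ∂μ ≤ μ.real univ * c := integral_le_of_ae_le_const hFμ hμ
    _ ≤ ν.real univ * c := hmass
    _ ≤ ∫ x, F x ∂ν := by simpa using integral_mono_ae (integrable_const c) hFν hν

/-- Monotonicity of generalised Cahn–Hoffman measures: if, for `i = 1,2`, `u_i` is Lipschitz and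
`z_i ∈ 𝓜⁺(C_r)` with `z_i(C_r) ≤ 1` satisfies the calibration identity for `u_i`, then for any
continuous nondecreasing `ψ, g₁, g₂` and `v₁₂ := ψ(g₁(u₁) − g₂(u₂))` one has
`∫_{C_r} (v₁₂(x) − v₁₂(y)) d(z₁ − z₂) ≥ 0`. -/
theorem statement4 (N : ℕ) (r : ℝ) (hr : 0 < r)
    (u₁ u₂ : Euc N → ℝ) (hu₁ : ∃ K, LipschitzWith K u₁) (hu₂ : ∃ K, LipschitzWith K u₂)
    (z₁ z₂ : Measure (Euc N × Euc N))
    (hsupp₁ : z₁ (Cr N r)ᶜ = 0) (hsupp₂ : z₂ (Cr N r)ᶜ = 0)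
    (hmass₁ : z₁ Set.univ ≤ 1) (hmass₂ : z₂ Set.univ ≤ 1)
    (hcal₁ : ENNReal.ofReal (∫ q : Euc N × Euc N, (u₁ q.1 - u₁ q.2) ∂z₁)
      = osc u₁ (ball (0 : Euc N) r))
    (hcal₂ : ENNReal.ofReal (∫ q : Euc N × Euc N, (u₂ q.1 - u₂ q.2) ∂z₂)
      = osc u₂ (ball (0 : Euc N) r))
    (ψ g₁ g₂ : ℝ → ℝ)
    (hψc : Continuous ψ) (hg₁c : Continuous g₁) (hg₂c : Continuous g₂)
    (hψm : Monotone ψ) (hg₁m : Monotone g₁) (hg₂m : Monotone g₂) :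
    ∫ q : Euc N × Euc N,
        (ψ (g₁ (u₁ q.1) - g₂ (u₂ q.1)) - ψ (g₁ (u₁ q.2) - g₂ (u₂ q.2))) ∂z₂
      ≤ ∫ q : Euc N × Euc N,
        (ψ (g₁ (u₁ q.1) - g₂ (u₂ q.1)) - ψ (g₁ (u₁ q.2) - g₂ (u₂ q.2))) ∂z₁ := by
  have hz₁ : IsCalibration u₁ r z₁ := ⟨hsupp₁, hmass₁, hcal₁⟩
  have hz₂ : IsCalibration u₂ r z₂ := ⟨hsupp₂, hmass₂, hcal₂⟩
  have := hz₁.isFiniteMeasure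
  have := hz₂.isFiniteMeasure
  have hc₁ : Continuous u₁ := hu₁.elim fun _ h => h.continuous
  have hc₂ : Continuous u₂ := hu₂.elim fun _ h => h.continuous
  have hK := isCompact_closedBall (0 : Euc N) r
  have hne : (closedBall (0 : Euc N) r).Nonempty := nonempty_closedBall.2 hr.le
  obtain ⟨x₁, hx₁, hmax₁⟩ := hK.exists_isMaxOn hne hc₁.continuousOn
  obtain ⟨y₁, hy₁, hmin₁⟩ := hK.exists_isMinOn hne hc₁.continuousOn
  obtain ⟨x₂, hx₂, hmax₂⟩ := hK.exists_isMaxOn hne hc₂.continuousOn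
  obtain ⟨y₂, hy₂, hmin₂⟩ := hK.exists_isMinOn hne hc₂.continuousOn
  refine integral_le_integral_of_ae_le_const_of_ae_const_le (hz₂.integrable (by fun_prop))
    (hz₁.integrable (by fun_prop)) ?_ ?_ (mul_comp_sub_sub_comp_sub_le hψm hg₁m hg₂m
      (isMaxOn_iff.mp hmax₁ y₁ hy₁) (isMaxOn_iff.mp hmax₂ y₂ hy₂)
      hz₁.measureReal_univ_le_one hz₂.measureReal_univ_le_one
      (hz₁.one_le_measureReal_univ hr hc₁ hx₁ hy₁ hmax₁ hmin₁)
      (hz₂.one_le_measureReal_univ hr hc₂ hx₂ hy₂ hmax₂ hmin₂))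
  · filter_upwards [hz₂.ae_eq hr hc₂ hx₂ hy₂ hmax₂ hmin₂, hz₂.ae_mem_Cr] with q ⟨h₁, h₂⟩ ⟨hq₁, hq₂⟩
    rw [h₁, h₂]
    exact comp_sub_sub_comp_sub_le hψm hg₁m hg₂m (hmax₁ hq₁) le_rfl (hmin₁ hq₂) le_rfl
  · filter_upwards [hz₁.ae_eq hr hc₁ hx₁ hy₁ hmax₁ hmin₁, hz₁.ae_mem_Cr] with q ⟨h₁, h₂⟩ ⟨hq₁, hq₂⟩
    rw [h₁, h₂]
    exact comp_sub_sub_comp_sub_le hψm hg₁m hg₂m le_rfl (hmax₂ hq₁) le_rfl (hmin₂ hq₂)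
end
end

section
/- For i = 1, 2, let z_i ∈ [−1, 1] and b_i, c_i ∈ ℝ satisfy z_i (b_i − c_i) = |b_i − c_i|. Let ψ, g₁, g₂: ℝ → ℝ be monotone nondecreasing functions. Then (z₁ − z₂) ( ψ(g₁(b₁) − g₂(b₂)) − ψ(g₁(c₁) − g₂(c₂)) ) ≥ 0. -/
lemma aux_le (z b c : ℝ) (h : z * (b - c) = |b - c|) (hz : z < 1) : b ≤ c := by
  by_contra hbc
  push_neg at hbc
  rw [abs_of_pos (by linarith)] at h
  have h0 : (z - 1) * (b - c) = 0 := by ring_nf; linarith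
  rcases mul_eq_zero.1 h0 with h' | h' <;> linarith

lemma aux_ge (z b c : ℝ) (h : z * (b - c) = |b - c|) (hz : -1 < z) : c ≤ b := by
  by_contra hbc
  push_neg at hbc
  rw [abs_of_neg (by linarith)] at h
  have h0 : (z + 1) * (b - c) = 0 := by ring_nf; linarith
  rcases mul_eq_zero.1 h0 with h' | h' <;> linarith

/-- For `i = 1, 2`, let `z_i ∈ [−1, 1]` and `b_i, c_i ∈ ℝ` satisfy `z_i (b_i − c_i) = |b_i − c_i|`.
Let `ψ, g₁, g₂ : ℝ → ℝ` be monotone nondecreasing. Then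
`(z₁ − z₂)(ψ(g₁(b₁) − g₂(b₂)) − ψ(g₁(c₁) − g₂(c₂))) ≥ 0`. -/
theorem statement15 (z₁ z₂ b₁ b₂ c₁ c₂ : ℝ)
    (hz₁ : z₁ ∈ Set.Icc (-1 : ℝ) 1) (hz₂ : z₂ ∈ Set.Icc (-1 : ℝ) 1)
    (h₁ : z₁ * (b₁ - c₁) = |b₁ - c₁|) (h₂ : z₂ * (b₂ - c₂) = |b₂ - c₂|)
    (ψ g₁ g₂ : ℝ → ℝ) (hψ : Monotone ψ) (hg₁ : Monotone g₁) (hg₂ : Monotone g₂) :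
    0 ≤ (z₁ - z₂) * (ψ (g₁ b₁ - g₂ b₂) - ψ (g₁ c₁ - g₂ c₂)) := by
  obtain ⟨hz₁l, hz₁u⟩ := hz₁
  obtain ⟨hz₂l, hz₂u⟩ := hz₂
  rcases lt_trichotomy z₁ z₂ with h | h | h
  · have hb₁ : b₁ ≤ c₁ := aux_le z₁ b₁ c₁ h₁ (lt_of_lt_of_le h hz₂u)
    have hb₂ : c₂ ≤ b₂ := aux_ge z₂ b₂ c₂ h₂ (lt_of_le_of_lt hz₁l h)
    have hψ' : ψ (g₁ b₁ - g₂ b₂) ≤ ψ (g₁ c₁ - g₂ c₂) := by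
      apply hψ
      have := hg₁ hb₁
      have := hg₂ hb₂
      linarith
    nlinarith
  · simp [h]
  · have hb₁ : c₁ ≤ b₁ := aux_ge z₁ b₁ c₁ h₁ (lt_of_le_of_lt hz₂l h)
    have hb₂ : b₂ ≤ c₂ := aux_le z₂ b₂ c₂ h₂ (lt_of_lt_of_le h hz₁u)
    have hψ' : ψ (g₁ c₁ - g₂ c₂) ≤ ψ (g₁ b₁ - g₂ b₂) := by
      apply hψ
      have := hg₁ hb₁
      have := hg₂ hb₂
      linarith
    exact mul_nonneg (by linarith) (by linarith)
end
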